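/- Let r,s,t,u be integers with ru−st=1 and let φ₅ : G(r,s,t,u) → ℤ/2ℤ be the (unique) group homomorphism sending the generators a ↦ 1, b ↦ 0, c ↦ 1. Then the kernel of φ₅ is isomorphic, as an abstract group, to the torus-bundle group T(ru+ts, −2rt, −2su, ru+ts). -/

import Mathlib

/-- The relators of the presentation of the fundamental group of the sapphire
Sol 3-manifold determined by the matrix `[[r, s], [t, u]]`:
`a·b·a⁻¹·b`, `c²·a^(−2r)·b^(−s)` and `c·a^(2t)·b^u·c⁻¹·a^(2t)·b^u`,
where `a, b, c` are the generators `of 0, of 1, of 2`. -/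
def sapphireRels (r s t u : ℤ) : Set (FreeGroup (Fin 3)) :=
  { FreeGroup.of 0 * FreeGroup.of 1 * (FreeGroup.of 0)⁻¹ * FreeGroup.of 1,
    FreeGroup.of 2 ^ (2 : ℤ) * FreeGroup.of 0 ^ (-(2 * r)) * FreeGroup.of 1 ^ (-s),
    FreeGroup.of 2 * FreeGroup.of 0 ^ (2 * t) * FreeGroup.of 1 ^ u * (FreeGroup.of 2)⁻¹ *
      FreeGroup.of 0 ^ (2 * t) * FreeGroup.of 1 ^ u }

/-- The fundamental group `G(r,s,t,u)` of the sapphire Sol 3-manifold. -/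
abbrev SapphireGroup (r s t u : ℤ) := PresentedGroup (sapphireRels r s t u)

/-- The relators of the presentation of the fundamental group of the torus bundle
over `S¹` with Anosov gluing matrix `[[m, n], [p, q]]`:
`a·b·a⁻¹·b⁻¹`, `c·a·c⁻¹·b^(−p)·a^(−m)` and `c·b·c⁻¹·b^(−q)·a^(−n)`. -/
def torusBundleRels (m n p q : ℤ) : Set (FreeGroup (Fin 3)) :=
  { FreeGroup.of 0 * FreeGroup.of 1 * (FreeGroup.of 0)⁻¹ * (FreeGroup.of 1)⁻¹,
    FreeGroup.of 2 * FreeGroup.of 0 * (FreeGroup.of 2)⁻¹ *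
      FreeGroup.of 1 ^ (-p) * FreeGroup.of 0 ^ (-m),
    FreeGroup.of 2 * FreeGroup.of 1 * (FreeGroup.of 2)⁻¹ *
      FreeGroup.of 1 ^ (-q) * FreeGroup.of 0 ^ (-n) }

/-- The fundamental group `T(m,n,p,q)` of the torus bundle over the circle. -/
abbrev TorusBundleGroup (m n p q : ℤ) := PresentedGroup (torusBundleRels m n p q)

/-!
Write `x = a²` and `y = b`. They commute, and conjugation by `a` acts on the lattice
`x^i y^j` by `(i, j) ↦ (i, -j)`, while conjugation by `c` acts by the reflection fixing
`(r, s)` and negating `(t, u)`. Hence `a c⁻¹` acts by `M = [[ru+ts, -2rt], [-2su, ru+ts]]`, so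
`α ↦ a², β ↦ b, γ ↦ a c⁻¹` defines a map `Ψ : T → G` into `ker φ`. Its image contains `a²`, is
normalised by `a` and generates `G` together with `a`, so it is all of `ker φ`.

For injectivity, conjugation by `a` induces the endomorphism `σ` of `T` fixing `α`, inverting `β`
and sending `γ` to `α^(1-r) β^(-s) γ⁻¹`; its square is conjugation by `α`. In
`(T ⋊_σ ℤ) ⧸ ⟨(α⁻¹, 2)⟩`, which still contains `T`, the generator of `ℤ` is a square root of `α`
inducing `σ`, and `G` maps there compatibly with `Ψ`.
-/

universe u

open Function

section Lattice

variable {Γ Γ' : Type*} [Group Γ] [Group Γ'] {x y : Γ}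

def latticeElem (x y : Γ) (i j : ℤ) : Γ := x ^ i * y ^ j

@[simp] lemma latticeElem_one_zero (x y : Γ) : latticeElem x y 1 0 = x := by
  simp [latticeElem]

@[simp] lemma latticeElem_zero_one (x y : Γ) : latticeElem x y 0 1 = y := by
  simp [latticeElem]

lemma map_latticeElem (f : Γ →* Γ') (x y : Γ) (i j : ℤ) :
    f (latticeElem x y i j) = latticeElem (f x) (f y) i j := by
  simp [latticeElem]

lemma latticeElem_mul (hxy : Commute x y) (i j k l : ℤ) :
    latticeElem x y i j * latticeElem x y k l = latticeElem x y (i + k) (j + l) := by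
  rw [latticeElem, latticeElem, latticeElem, mul_assoc, ← mul_assoc (y ^ j),
    ← (hxy.zpow_zpow k j).eq]
  simp only [zpow_add, mul_assoc]

lemma latticeElem_zpow (hxy : Commute x y) (i j n : ℤ) :
    latticeElem x y i j ^ n = latticeElem x y (i * n) (j * n) := by
  rw [latticeElem, (hxy.zpow_zpow i j).mul_zpow, ← zpow_mul, ← zpow_mul, latticeElem]

lemma latticeElem_inv (hxy : Commute x y) (i j : ℤ) :
    (latticeElem x y i j)⁻¹ = latticeElem x y (-i) (-j) := by
  simpa using latticeElem_zpow hxy i j (-1)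

lemma latticeElem_inv_right (x y : Γ) (i j : ℤ) :
    latticeElem x y⁻¹ i j = latticeElem x y i (-j) := by
  rw [latticeElem, latticeElem, inv_zpow, zpow_neg]

lemma latticeElem_commute (hxy : Commute x y) (i j k l : ℤ) :
    Commute (latticeElem x y i j) (latticeElem x y k l) := by
  rw [Commute, SemiconjBy, latticeElem_mul hxy, latticeElem_mul hxy, add_comm i, add_comm j]

lemma latticeElem_latticeElem (hxy : Commute x y) (a b c d i j : ℤ) :
    latticeElem (latticeElem x y a b) (latticeElem x y c d) i j =
      latticeElem x y (a * i + c * j) (b * i + d * j) := by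
  rw [latticeElem, latticeElem_zpow hxy, latticeElem_zpow hxy, latticeElem_mul hxy]

lemma conj_latticeElem (hxy : Commute x y) {g : Γ} {m n p q : ℤ}
    (hx : g * x * g⁻¹ = latticeElem x y m p) (hy : g * y * g⁻¹ = latticeElem x y n q) (i j : ℤ) :
    g * latticeElem x y i j * g⁻¹ = latticeElem x y (m * i + n * j) (p * i + q * j) := by
  have hg := map_latticeElem (MulAut.conj g).toMonoidHom x y i j
  simp only [MulEquiv.coe_toMonoidHom, MulAut.conj_apply] at hg
  rw [hg, hx, hy, latticeElem_latticeElem hxy]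

lemma inv_conj_latticeElem (hxy : Commute x y) {g : Γ} {m n p q : ℤ}
    (hx : g⁻¹ * x * g = latticeElem x y m p) (hy : g⁻¹ * y * g = latticeElem x y n q) (i j : ℤ) :
    g⁻¹ * latticeElem x y i j * g = latticeElem x y (m * i + n * j) (p * i + q * j) := by
  simpa using conj_latticeElem hxy (g := g⁻¹) (by simpa using hx) (by simpa using hy) i j

lemma commute_sq_of_mul_mul_inv_eq_inv {a b : Γ} (hab : a * b * a⁻¹ = b⁻¹) :
    Commute (a ^ 2) b := by
  refine mul_inv_eq_iff_eq_mul.mp ?_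
  calc a ^ 2 * b * (a ^ 2)⁻¹ = a * (a * b * a⁻¹) * a⁻¹ := by rw [sq]; group
    _ = a * b⁻¹ * a⁻¹ := by rw [hab]
    _ = (a * b * a⁻¹)⁻¹ := by group
    _ = b := by rw [hab, inv_inv]

end Lattice

lemma zpow_two_mul {Γ : Type*} [Group Γ] (a : Γ) (i : ℤ) : a ^ (2 * i) = (a ^ 2) ^ i := by
  rw [zpow_mul, zpow_ofNat]

namespace SapphireGroup

variable {r s t u : ℤ} {Γ : Type*} [Group Γ]

lemma sq_relator_eq_one_iff {a b c : Γ} (hab : a * b * a⁻¹ = b⁻¹) :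
    c ^ (2 : ℤ) * a ^ (-(2 * r)) * b ^ (-s) = 1 ↔ c ^ 2 = latticeElem (a ^ 2) b r s := by
  rw [zpow_ofNat, mul_assoc, ← mul_neg, zpow_two_mul]
  change c ^ 2 * latticeElem (a ^ 2) b (-r) (-s) = 1 ↔ _
  rw [← latticeElem_inv (commute_sq_of_mul_mul_inv_eq_inv hab), mul_inv_eq_one]

lemma conj_relator_eq_one_iff {a b c : Γ} :
    c * a ^ (2 * t) * b ^ u * c⁻¹ * a ^ (2 * t) * b ^ u = 1 ↔
      c * latticeElem (a ^ 2) b t u * c⁻¹ = (latticeElem (a ^ 2) b t u)⁻¹ := by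
  simp only [latticeElem, zpow_two_mul, ← mul_eq_one_iff_eq_inv, mul_assoc]

def lift (a b c : Γ) (hab : a * b * a⁻¹ = b⁻¹) (hc : c ^ 2 = latticeElem (a ^ 2) b r s)
    (hcL : c * latticeElem (a ^ 2) b t u * c⁻¹ = (latticeElem (a ^ 2) b t u)⁻¹) :
    SapphireGroup r s t u →* Γ :=
  PresentedGroup.toGroup (f := ![a, b, c]) <| by
    rintro w (rfl | rfl | rfl) <;> simp only [map_mul, map_zpow, map_inv, FreeGroup.lift_apply_of]
    · exact mul_eq_one_iff_eq_inv.mpr hab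
    · exact (sq_relator_eq_one_iff hab).mpr hc
    · exact conj_relator_eq_one_iff.mpr hcL

variable (a b c : Γ) (hab : a * b * a⁻¹ = b⁻¹) (hc : c ^ 2 = latticeElem (a ^ 2) b r s)
    (hcL : c * latticeElem (a ^ 2) b t u * c⁻¹ = (latticeElem (a ^ 2) b t u)⁻¹)

@[simp] lemma lift_of_zero : lift a b c hab hc hcL (PresentedGroup.of 0) = a :=
  PresentedGroup.toGroup.of _

@[simp] lemma lift_of_one : lift a b c hab hc hcL (PresentedGroup.of 1) = b :=
  PresentedGroup.toGroup.of _

@[simp] lemma lift_of_two : lift a b c hab hc hcL (PresentedGroup.of 2) = c :=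
  PresentedGroup.toGroup.of _

local notation "𝐚" => (PresentedGroup.of 0 : SapphireGroup r s t u)
local notation "𝐛" => (PresentedGroup.of 1 : SapphireGroup r s t u)
local notation "𝐜" => (PresentedGroup.of 2 : SapphireGroup r s t u)

lemma of_zero_conj_of_one : 𝐚 * 𝐛 * 𝐚⁻¹ = 𝐛⁻¹ := by
  have := PresentedGroup.one_of_mem (rels := sapphireRels r s t u) (Set.mem_insert _ _)
  simp only [map_mul, map_inv] at this
  exact mul_eq_one_iff_eq_inv.mp this

lemma of_two_sq : 𝐜 ^ 2 = latticeElem (𝐚 ^ 2) 𝐛 r s := by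
  have := PresentedGroup.one_of_mem (rels := sapphireRels r s t u)
    (Set.mem_insert_of_mem _ (Set.mem_insert _ _))
  simp only [map_mul, map_zpow] at this
  exact (sq_relator_eq_one_iff of_zero_conj_of_one).mp this

lemma of_two_conj : 𝐜 * latticeElem (𝐚 ^ 2) 𝐛 t u * 𝐜⁻¹ = (latticeElem (𝐚 ^ 2) 𝐛 t u)⁻¹ := by
  have := PresentedGroup.one_of_mem (rels := sapphireRels r s t u)
    (Set.mem_insert_of_mem _ (Set.mem_insert_of_mem _ rfl))
  simp only [map_mul, map_zpow, map_inv] at this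
  exact conj_relator_eq_one_iff.mp this

lemma commute_sq_of_zero_of_one : Commute (𝐚 ^ 2) 𝐛 :=
  commute_sq_of_mul_mul_inv_eq_inv of_zero_conj_of_one

lemma of_zero_conj_latticeElem (i j : ℤ) :
    𝐚 * latticeElem (𝐚 ^ 2) 𝐛 i j * 𝐚⁻¹ = latticeElem (𝐚 ^ 2) 𝐛 i (-j) := by
  have hx : 𝐚 * 𝐚 ^ 2 * 𝐚⁻¹ = latticeElem (𝐚 ^ 2) 𝐛 1 0 := by
    rw [latticeElem_one_zero]; group
  have hy : 𝐚 * 𝐛 * 𝐚⁻¹ = latticeElem (𝐚 ^ 2) 𝐛 0 (-1) := by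
    simp [latticeElem, of_zero_conj_of_one]
  simpa using conj_latticeElem commute_sq_of_zero_of_one hx hy i j

lemma of_two_inv_conj_latticeElem (h : r * u - s * t = 1) (i j : ℤ) :
    𝐜⁻¹ * latticeElem (𝐚 ^ 2) 𝐛 i j * 𝐜 =
      latticeElem (𝐚 ^ 2) 𝐛 ((r * u + t * s) * i - 2 * r * t * j)
        (2 * s * u * i - (r * u + t * s) * j) := by
  have hL := commute_sq_of_zero_of_one (r := r) (s := s) (t := t) (u := u)
  have hx : 𝐜⁻¹ * latticeElem (𝐚 ^ 2) 𝐛 r s * 𝐜 =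
      latticeElem (latticeElem (𝐚 ^ 2) 𝐛 r s) (latticeElem (𝐚 ^ 2) 𝐛 t u) 1 0 := by
    rw [latticeElem_one_zero, ← of_two_sq]; group
  have hy : 𝐜⁻¹ * latticeElem (𝐚 ^ 2) 𝐛 t u * 𝐜 =
      latticeElem (latticeElem (𝐚 ^ 2) 𝐛 r s) (latticeElem (𝐚 ^ 2) 𝐛 t u) 0 (-1) := by
    calc 𝐜⁻¹ * latticeElem (𝐚 ^ 2) 𝐛 t u * 𝐜
        = (𝐜⁻¹ * (latticeElem (𝐚 ^ 2) 𝐛 t u)⁻¹ * 𝐜)⁻¹ := by group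
      _ = (𝐜⁻¹ * (𝐜 * latticeElem (𝐚 ^ 2) 𝐛 t u * 𝐜⁻¹) * 𝐜)⁻¹ := by rw [of_two_conj]
      _ = (latticeElem (𝐚 ^ 2) 𝐛 t u)⁻¹ := by group
      _ = _ := by simp [latticeElem]
  -- coordinates in the basis `(r, s), (t, u)`, on which conjugation by `c` is `diag(1, -1)`
  have hbasis : latticeElem (𝐚 ^ 2) 𝐛 i j = latticeElem (latticeElem (𝐚 ^ 2) 𝐛 r s)
      (latticeElem (𝐚 ^ 2) 𝐛 t u) (u * i - t * j) (r * j - s * i) := by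
    rw [latticeElem_latticeElem hL]
    congr 1
    · linear_combination (-i) * h
    · linear_combination (-j) * h
  rw [hbasis, inv_conj_latticeElem (latticeElem_commute hL r s t u) hx hy,
    latticeElem_latticeElem hL]
  congr 1 <;> ring

lemma of_zero_mul_of_two_inv_conj_latticeElem (h : r * u - s * t = 1) (i j : ℤ) :
    (𝐚 * 𝐜⁻¹) * latticeElem (𝐚 ^ 2) 𝐛 i j * (𝐚 * 𝐜⁻¹)⁻¹ =
      latticeElem (𝐚 ^ 2) 𝐛 ((r * u + t * s) * i + -(2 * r * t) * j)
        (-(2 * s * u) * i + (r * u + t * s) * j) := by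
  calc (𝐚 * 𝐜⁻¹) * latticeElem (𝐚 ^ 2) 𝐛 i j * (𝐚 * 𝐜⁻¹)⁻¹
      = 𝐚 * (𝐜⁻¹ * latticeElem (𝐚 ^ 2) 𝐛 i j * 𝐜) * 𝐚⁻¹ := by group
    _ = _ := by
      rw [of_two_inv_conj_latticeElem h, of_zero_conj_latticeElem]
      congr 1 <;> ring

end SapphireGroup

namespace TorusBundleGroup

variable {m n p q : ℤ} {Γ : Type*} [Group Γ]

lemma conj_relator_eq_one_iff {g x y z : Γ} {i j : ℤ} :
    g * z * g⁻¹ * y ^ (-j) * x ^ (-i) = 1 ↔ g * z * g⁻¹ = latticeElem x y i j := by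
  rw [← mul_inv_eq_one (b := latticeElem x y i j), latticeElem, mul_inv_rev, ← zpow_neg,
    ← zpow_neg, mul_assoc (g * z * g⁻¹)]

lemma commutator_eq_one_iff {x y : Γ} : x * y * x⁻¹ * y⁻¹ = 1 ↔ Commute x y := by
  rw [mul_inv_eq_one, mul_inv_eq_iff_eq_mul]; rfl

def lift (x y g : Γ) (hxy : Commute x y) (hx : g * x * g⁻¹ = latticeElem x y m p)
    (hy : g * y * g⁻¹ = latticeElem x y n q) : TorusBundleGroup m n p q →* Γ :=
  PresentedGroup.toGroup (f := ![x, y, g]) <| by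
    rintro w (rfl | rfl | rfl) <;> simp only [map_mul, map_zpow, map_inv, FreeGroup.lift_apply_of]
    · exact commutator_eq_one_iff.mpr hxy
    · exact conj_relator_eq_one_iff.mpr hx
    · exact conj_relator_eq_one_iff.mpr hy

variable (x y g : Γ) (hxy : Commute x y) (hx : g * x * g⁻¹ = latticeElem x y m p)
    (hy : g * y * g⁻¹ = latticeElem x y n q)

@[simp] lemma lift_of_zero : lift x y g hxy hx hy (PresentedGroup.of 0) = x :=
  PresentedGroup.toGroup.of _

@[simp] lemma lift_of_one : lift x y g hxy hx hy (PresentedGroup.of 1) = y :=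
  PresentedGroup.toGroup.of _

@[simp] lemma lift_of_two : lift x y g hxy hx hy (PresentedGroup.of 2) = g :=
  PresentedGroup.toGroup.of _

local notation "𝛂" => (PresentedGroup.of 0 : TorusBundleGroup m n p q)
local notation "𝛃" => (PresentedGroup.of 1 : TorusBundleGroup m n p q)
local notation "𝛄" => (PresentedGroup.of 2 : TorusBundleGroup m n p q)

lemma commute_of_zero_of_one : Commute 𝛂 𝛃 := by
  have := PresentedGroup.one_of_mem (rels := torusBundleRels m n p q) (Set.mem_insert _ _)
  simp only [map_mul, map_inv] at this
  exact commutator_eq_one_iff.mp this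

lemma of_two_conj_of_zero : 𝛄 * 𝛂 * 𝛄⁻¹ = latticeElem 𝛂 𝛃 m p := by
  have := PresentedGroup.one_of_mem (rels := torusBundleRels m n p q)
    (Set.mem_insert_of_mem _ (Set.mem_insert _ _))
  simp only [map_mul, map_zpow, map_inv] at this
  exact conj_relator_eq_one_iff.mp this

lemma of_two_conj_of_one : 𝛄 * 𝛃 * 𝛄⁻¹ = latticeElem 𝛂 𝛃 n q := by
  have := PresentedGroup.one_of_mem (rels := torusBundleRels m n p q)
    (Set.mem_insert_of_mem _ (Set.mem_insert_of_mem _ rfl))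
  simp only [map_mul, map_zpow, map_inv] at this
  exact conj_relator_eq_one_iff.mp this

lemma of_two_conj_latticeElem (i j : ℤ) :
    𝛄 * latticeElem 𝛂 𝛃 i j * 𝛄⁻¹ = latticeElem 𝛂 𝛃 (m * i + n * j) (p * i + q * j) :=
  conj_latticeElem commute_of_zero_of_one of_two_conj_of_zero of_two_conj_of_one i j

lemma of_two_inv_conj_latticeElem (hdet : m * q - n * p = 1) (i j : ℤ) :
    𝛄⁻¹ * latticeElem 𝛂 𝛃 i j * 𝛄 = latticeElem 𝛂 𝛃 (q * i - n * j) (m * j - p * i) := by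
  have e := of_two_conj_latticeElem (m := m) (n := n) (p := p) (q := q)
    (q * i - n * j) (m * j - p * i)
  rw [show m * (q * i - n * j) + n * (m * j - p * i) = i by linear_combination i * hdet,
    show p * (q * i - n * j) + q * (m * j - p * i) = j by linear_combination j * hdet] at e
  rw [← e]; group

lemma latticeElem_mul_inv_conj_latticeElem (hdet : m * q - n * p = 1) (v w i j : ℤ) :
    (latticeElem 𝛂 𝛃 v w * 𝛄⁻¹) * latticeElem 𝛂 𝛃 i j * (latticeElem 𝛂 𝛃 v w * 𝛄⁻¹)⁻¹ =
      latticeElem 𝛂 𝛃 (q * i - n * j) (m * j - p * i) := by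
  calc (latticeElem 𝛂 𝛃 v w * 𝛄⁻¹) * latticeElem 𝛂 𝛃 i j * (latticeElem 𝛂 𝛃 v w * 𝛄⁻¹)⁻¹
      = latticeElem 𝛂 𝛃 v w * (𝛄⁻¹ * latticeElem 𝛂 𝛃 i j * 𝛄) * (latticeElem 𝛂 𝛃 v w)⁻¹ := by
        group
    _ = latticeElem 𝛂 𝛃 (q * i - n * j) (m * j - p * i) := by
        rw [of_two_inv_conj_latticeElem hdet,
          (latticeElem_commute commute_of_zero_of_one _ _ _ _).eq, mul_inv_cancel_right]

end TorusBundleGroup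

section SquareRootOfConj

open Multiplicative

variable {T : Type u} [Group T] {e : MulAut T} {α : T}

lemma zpowersHom_apply_eq_self (he : e α = α) (k : Multiplicative ℤ) : zpowersHom _ e k α = α :=
  Subgroup.zpow_mem (MulAction.stabilizer (MulAut T) α) (x := e) he k.toAdd

lemma commute_mk_inv_ofAdd_two (he : e α = α) (hee : ∀ x, e (e x) = α * x * α⁻¹)
    (g : T ⋊[zpowersHom _ e] Multiplicative ℤ) : Commute g ⟨α⁻¹, ofAdd 2⟩ := by
  apply SemidirectProduct.ext
  · simp only [SemidirectProduct.mul_left, map_inv, zpowersHom_apply_eq_self he]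
    rw [zpowersHom_apply, toAdd_ofAdd, zpow_two, MulAut.mul_apply, hee]
    group
  · exact mul_comm g.right (ofAdd 2)

theorem exists_overgroup_of_sq_eq_conj (σ : T →* T) (hσα : σ α = α)
    (hσσ : ∀ x, σ (σ x) = α * x * α⁻¹) :
    ∃ (Q : Type u) (_ : Group Q) (π : T →* Q) (A : Q),
      Injective π ∧ (∀ x, A * π x * A⁻¹ = π (σ x)) ∧ A ^ 2 = π α := by
  have hσσ_bij : Bijective (σ ∘ σ) := by
    convert (MulAut.conj α).bijective using 1
    ext x
    exact hσσ x
  let e : MulAut T := MulEquiv.ofBijective σ ⟨hσσ_bij.1.of_comp, hσσ_bij.2.of_comp⟩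
  let z : T ⋊[zpowersHom _ e] Multiplicative ℤ := ⟨α⁻¹, ofAdd 2⟩
  let N := Subgroup.zpowers z
  have : N.Normal := ⟨fun n hn g => by
    obtain ⟨k, rfl⟩ := Subgroup.mem_zpowers_iff.mp hn
    rwa [((commute_mk_inv_ofAdd_two hσα hσσ g).zpow_right k).eq, mul_inv_cancel_right]⟩
  have hz : QuotientGroup.mk' N z = 1 := (QuotientGroup.eq_one_iff z).mpr (Subgroup.mem_zpowers z)
  refine ⟨_ ⧸ N, inferInstance, (QuotientGroup.mk' N).comp SemidirectProduct.inl,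
    QuotientGroup.mk' N (SemidirectProduct.inr (ofAdd 1)), ?_, fun x => ?_, ?_⟩
  · rw [injective_iff_map_eq_one]
    intro x hx
    obtain ⟨k, hk⟩ := Subgroup.mem_zpowers_iff.mp ((QuotientGroup.eq_one_iff _).mp hx)
    have hk0 : k = 0 := by
      have h := congrArg SemidirectProduct.rightHom hk
      rw [map_zpow, SemidirectProduct.rightHom_inl] at h
      change ofAdd (2 : ℤ) ^ k = 1 at h
      rw [← ofAdd_zsmul, ofAdd_eq_one, smul_eq_mul] at h
      omega
    rw [hk0, zpow_zero] at hk
    exact SemidirectProduct.inl_injective (by rw [← hk, map_one])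
  · rw [MonoidHom.comp_apply, MonoidHom.comp_apply, ← map_inv, ← map_mul, ← map_mul, ← map_inv,
      ← SemidirectProduct.inl_aut, zpowersHom_apply, toAdd_ofAdd, zpow_one]
    rfl
  · have hsq : SemidirectProduct.inr (ofAdd 1) * SemidirectProduct.inr (ofAdd 1) =
        SemidirectProduct.inl α * z := by
      apply SemidirectProduct.ext
      · simp [z]
      · rfl
    rw [MonoidHom.comp_apply, sq, ← map_mul, hsq, map_mul, hz, mul_one]

end SquareRootOfConj

open scoped Pointwise in
theorem Subgroup.eq_ker_of_sup_zpowers_eq_top {G M : Type*} [Group G] [Group M] (f : G →* M)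
    (H : Subgroup G) (g : G) (hconj : ∀ h ∈ H, g * h * g⁻¹ ∈ H) (hg2 : g ^ 2 ∈ H)
    (hsup : H ⊔ zpowers g = ⊤) (hH : H ≤ f.ker) (hfg : orderOf (f g) = 2) : H = f.ker := by
  have hg : g ∈ normalizer (H : Set G) := mem_normalizer_iff.mpr fun h => ⟨hconj h, fun hgh => by
    have := H.mul_mem (H.mul_mem (H.inv_mem hg2) (hconj _ hgh)) hg2
    rwa [show (g ^ 2)⁻¹ * (g * (g * h * g⁻¹) * g⁻¹) * g ^ 2 = h by group] at this⟩
  have : H.Normal := normalizer_eq_top_iff.mp <| top_le_iff.mp <|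
    hsup ▸ sup_le le_normalizer ((zpowers_le (H := normalizer (H : Set G))).mpr hg)
  refine le_antisymm hH fun x hx => ?_
  obtain ⟨h, hh, _, ⟨k, rfl⟩, rfl⟩ : x ∈ (H : Set G) * (zpowers g : Set G) := by
    rw [← normal_mul, hsup]; trivial
  have hk : f g ^ k = 1 := by
    have hfx : f (h * g ^ k) = 1 := hx
    rwa [map_mul, hH hh, one_mul, map_zpow] at hfx
  obtain ⟨j, rfl⟩ : (2 : ℤ) ∣ k := by exact_mod_cast hfg ▸ orderOf_dvd_iff_zpow_eq_one.mpr hk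
  change h * g ^ (2 * j) ∈ H
  rw [zpow_mul, zpow_ofNat]
  exact H.mul_mem hh (H.zpow_mem hg2 j)

section SapphireKernel

variable {r s t u : ℤ}

local notation "𝒢" => SapphireGroup r s t u
local notation "𝒯" =>
  TorusBundleGroup (r * u + t * s) (-(2 * r * t)) (-(2 * s * u)) (r * u + t * s)
local notation "𝐚" => (PresentedGroup.of 0 : 𝒢)
local notation "𝐛" => (PresentedGroup.of 1 : 𝒢)
local notation "𝐜" => (PresentedGroup.of 2 : 𝒢)
local notation "𝛂" => (PresentedGroup.of 0 : 𝒯)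
local notation "𝛃" => (PresentedGroup.of 1 : 𝒯)
local notation "𝛄" => (PresentedGroup.of 2 : 𝒯)

lemma det_torusBundleMatrix (h : r * u - s * t = 1) :
    (r * u + t * s) * (r * u + t * s) - -(2 * r * t) * -(2 * s * u) = 1 := by
  linear_combination (r * u - s * t + 1) * h

def torusBundleTwist (h : r * u - s * t = 1) : 𝒯 →* 𝒯 :=
  TorusBundleGroup.lift 𝛂 𝛃⁻¹ (latticeElem 𝛂 𝛃 (1 - r) (-s) * 𝛄⁻¹)
    TorusBundleGroup.commute_of_zero_of_one.inv_right
    (by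
      have := TorusBundleGroup.latticeElem_mul_inv_conj_latticeElem (det_torusBundleMatrix h)
        (1 - r) (-s) 1 0
      rw [latticeElem_one_zero] at this
      rw [this, latticeElem_inv_right]
      congr 1 <;> ring)
    (by
      have := TorusBundleGroup.latticeElem_mul_inv_conj_latticeElem (det_torusBundleMatrix h)
        (1 - r) (-s) 0 (-1)
      rw [show latticeElem 𝛂 𝛃 0 (-1) = 𝛃⁻¹ by simp [latticeElem]] at this
      rw [this, latticeElem_inv_right]
      congr 1 <;> ring)

variable (h : r * u - s * t = 1)

@[simp] lemma torusBundleTwist_of_zero : torusBundleTwist h 𝛂 = 𝛂 :=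
  TorusBundleGroup.lift_of_zero ..

@[simp] lemma torusBundleTwist_of_one : torusBundleTwist h 𝛃 = 𝛃⁻¹ :=
  TorusBundleGroup.lift_of_one ..

@[simp] lemma torusBundleTwist_of_two :
    torusBundleTwist h 𝛄 = latticeElem 𝛂 𝛃 (1 - r) (-s) * 𝛄⁻¹ :=
  TorusBundleGroup.lift_of_two ..

lemma torusBundleTwist_latticeElem (i j : ℤ) :
    torusBundleTwist h (latticeElem 𝛂 𝛃 i j) = latticeElem 𝛂 𝛃 i (-j) := by
  rw [map_latticeElem, torusBundleTwist_of_zero, torusBundleTwist_of_one, latticeElem_inv_right]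

lemma torusBundleTwist_torusBundleTwist (x : 𝒯) :
    torusBundleTwist h (torusBundleTwist h x) = 𝛂 * x * 𝛂⁻¹ := by
  have hαβ : Commute 𝛂 𝛃 := TorusBundleGroup.commute_of_zero_of_one
  have hγ : torusBundleTwist h (torusBundleTwist h 𝛄) = 𝛂 * 𝛄 * 𝛂⁻¹ := by
    calc torusBundleTwist h (torusBundleTwist h 𝛄)
        = latticeElem 𝛂 𝛃 (1 - r) s * (𝛄 * latticeElem 𝛂 𝛃 (r - 1) s * 𝛄⁻¹) * 𝛄 := by
          simp only [torusBundleTwist_of_two, map_mul, map_inv, torusBundleTwist_latticeElem,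
            mul_inv_rev, inv_inv, latticeElem_inv hαβ, neg_neg, neg_sub]
          group
      _ = latticeElem 𝛂 𝛃 1 0 * (𝛄 * latticeElem 𝛂 𝛃 (-1) 0 * 𝛄⁻¹) * 𝛄 := by
          rw [TorusBundleGroup.of_two_conj_latticeElem, TorusBundleGroup.of_two_conj_latticeElem,
            latticeElem_mul hαβ, latticeElem_mul hαβ]
          congr 2
          · linear_combination r * h
          · linear_combination (-s) * h
      _ = 𝛂 * 𝛄 * 𝛂⁻¹ := by
          rw [latticeElem_one_zero, show latticeElem 𝛂 𝛃 (-1) 0 = 𝛂⁻¹ by simp [latticeElem]]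
          group
  suffices (torusBundleTwist h).comp (torusBundleTwist h) = (MulAut.conj 𝛂).toMonoidHom from
    DFunLike.congr_fun this x
  refine PresentedGroup.ext fun i => ?_
  fin_cases i
  · simp
  · simp [hαβ.eq]
  · exact hγ

def torusBundleToSapphire : 𝒯 →* 𝒢 :=
  TorusBundleGroup.lift (𝐚 ^ 2) 𝐛 (𝐚 * 𝐜⁻¹) SapphireGroup.commute_sq_of_zero_of_one
    (by simpa using SapphireGroup.of_zero_mul_of_two_inv_conj_latticeElem h 1 0)
    (by simpa using SapphireGroup.of_zero_mul_of_two_inv_conj_latticeElem h 0 1)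

@[simp] lemma torusBundleToSapphire_of_zero : torusBundleToSapphire h 𝛂 = 𝐚 ^ 2 :=
  TorusBundleGroup.lift_of_zero ..

@[simp] lemma torusBundleToSapphire_of_one : torusBundleToSapphire h 𝛃 = 𝐛 :=
  TorusBundleGroup.lift_of_one ..

@[simp] lemma torusBundleToSapphire_of_two : torusBundleToSapphire h 𝛄 = 𝐚 * 𝐜⁻¹ :=
  TorusBundleGroup.lift_of_two ..

lemma torusBundleToSapphire_latticeElem (i j : ℤ) :
    torusBundleToSapphire h (latticeElem 𝛂 𝛃 i j) = latticeElem (𝐚 ^ 2) 𝐛 i j := by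
  rw [map_latticeElem, torusBundleToSapphire_of_zero, torusBundleToSapphire_of_one]

lemma conj_torusBundleToSapphire (x : 𝒯) :
    𝐚 * torusBundleToSapphire h x * 𝐚⁻¹ = torusBundleToSapphire h (torusBundleTwist h x) := by
  have hγ : 𝐚 * (𝐚 * 𝐜⁻¹) * 𝐚⁻¹ = latticeElem (𝐚 ^ 2) 𝐛 (1 - r) (-s) * (𝐚 * 𝐜⁻¹)⁻¹ := by
    calc 𝐚 * (𝐚 * 𝐜⁻¹) * 𝐚⁻¹ = latticeElem (𝐚 ^ 2) 𝐛 1 0 * (𝐜 ^ 2)⁻¹ * 𝐜 * 𝐚⁻¹ := by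
          rw [latticeElem_one_zero, sq, sq]; group
      _ = latticeElem (𝐚 ^ 2) 𝐛 1 0 * latticeElem (𝐚 ^ 2) 𝐛 (-r) (-s) * (𝐚 * 𝐜⁻¹)⁻¹ := by
          rw [SapphireGroup.of_two_sq, latticeElem_inv SapphireGroup.commute_sq_of_zero_of_one]
          group
      _ = latticeElem (𝐚 ^ 2) 𝐛 (1 - r) (-s) * (𝐚 * 𝐜⁻¹)⁻¹ := by
          rw [latticeElem_mul SapphireGroup.commute_sq_of_zero_of_one, sub_eq_add_neg, zero_add]
  suffices (MulAut.conj 𝐚).toMonoidHom.comp (torusBundleToSapphire h) =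
      (torusBundleToSapphire h).comp (torusBundleTwist h) from DFunLike.congr_fun this x
  refine PresentedGroup.ext fun i => ?_
  fin_cases i
  · change 𝐚 * 𝐚 ^ 2 * 𝐚⁻¹ = torusBundleToSapphire h (torusBundleTwist h 𝛂)
    rw [torusBundleTwist_of_zero, torusBundleToSapphire_of_zero]
    group
  · simp [SapphireGroup.of_zero_conj_of_one]
  · simpa [torusBundleToSapphire_latticeElem] using hγ

section Extension

variable {Q : Type*} [Group Q]

def sapphireToExtension (π : 𝒯 →* Q) (A : Q)
    (hA : ∀ x, A * π x * A⁻¹ = π (torusBundleTwist h x)) (hA2 : A ^ 2 = π 𝛂) : 𝒢 →* Q := by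
  have hαβ : Commute 𝛂 𝛃 := TorusBundleGroup.commute_of_zero_of_one
  refine SapphireGroup.lift A (π 𝛃) (π 𝛄⁻¹ * A) ?_ ?_ ?_
  · rw [hA, torusBundleTwist_of_one, map_inv]
  · calc (π 𝛄⁻¹ * A) ^ 2 = π 𝛄⁻¹ * (A * π 𝛄⁻¹ * A⁻¹) * A ^ 2 := by rw [sq, sq]; group
      _ = π ((𝛄⁻¹ * torusBundleTwist h 𝛄⁻¹) * latticeElem 𝛂 𝛃 1 0) := by
        rw [hA, hA2, latticeElem_one_zero, map_mul, map_mul]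
      _ = π (latticeElem 𝛂 𝛃 r s) := by
        rw [map_inv, torusBundleTwist_of_two, mul_inv_rev, inv_inv, inv_mul_cancel_left,
          latticeElem_inv hαβ, latticeElem_mul hαβ]
        congr 2 <;> ring
      _ = latticeElem (A ^ 2) (π 𝛃) r s := by rw [map_latticeElem, hA2]
  · calc (π 𝛄⁻¹ * A) * latticeElem (A ^ 2) (π 𝛃) t u * (π 𝛄⁻¹ * A)⁻¹
        = π 𝛄⁻¹ * (A * π (latticeElem 𝛂 𝛃 t u) * A⁻¹) * (π 𝛄⁻¹)⁻¹ := by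
          rw [map_latticeElem, hA2]; group
      _ = π (𝛄⁻¹ * torusBundleTwist h (latticeElem 𝛂 𝛃 t u) * 𝛄) := by
          rw [hA, map_mul, map_mul, map_inv, inv_inv]
      _ = π ((latticeElem 𝛂 𝛃 t u)⁻¹) := by
          rw [torusBundleTwist_latticeElem,
            TorusBundleGroup.of_two_inv_conj_latticeElem (det_torusBundleMatrix h),
            latticeElem_inv hαβ]
          congr 2
          · linear_combination (-t) * h
          · linear_combination (-u) * h
      _ = (latticeElem (A ^ 2) (π 𝛃) t u)⁻¹ := by rw [map_inv, map_latticeElem, hA2]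

lemma sapphireToExtension_comp_torusBundleToSapphire (π : 𝒯 →* Q) (A : Q)
    (hA : ∀ x, A * π x * A⁻¹ = π (torusBundleTwist h x)) (hA2 : A ^ 2 = π 𝛂) :
    (sapphireToExtension h π A hA hA2).comp (torusBundleToSapphire h) = π := by
  refine PresentedGroup.ext fun i => ?_
  fin_cases i
  · simp [sapphireToExtension, hA2]
  · simp [sapphireToExtension]
  · simp [sapphireToExtension]

end Extension

theorem torusBundleToSapphire_injective : Injective (torusBundleToSapphire h) := by
  obtain ⟨Q, _, π, A, hπ, hA, hA2⟩ := exists_overgroup_of_sq_eq_conj (torusBundleTwist h)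
    (torusBundleTwist_of_zero h) (torusBundleTwist_torusBundleTwist h)
  rw [← sapphireToExtension_comp_torusBundleToSapphire h π A hA hA2, MonoidHom.coe_comp] at hπ
  exact hπ.of_comp

open Multiplicative in
theorem range_torusBundleToSapphire (φ : 𝒢 →* Multiplicative (ZMod 2))
    (ha : φ 𝐚 = ofAdd 1) (hb : φ 𝐛 = ofAdd 0) (hc : φ 𝐜 = ofAdd 1) :
    (torusBundleToSapphire h).range = φ.ker := by
  refine Subgroup.eq_ker_of_sup_zpowers_eq_top φ _ 𝐚 ?_ ⟨𝛂, torusBundleToSapphire_of_zero h⟩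
    ?_ ?_ ?_
  · rintro _ ⟨x, rfl⟩
    exact ⟨_, (conj_torusBundleToSapphire h x).symm⟩
  · refine eq_top_iff.mpr fun g _ => PresentedGroup.generated_by _ _ (fun i => ?_) g
    fin_cases i
    · exact Subgroup.mem_sup_right (Subgroup.mem_zpowers _)
    · exact Subgroup.mem_sup_left ⟨𝛃, torusBundleToSapphire_of_one h⟩
    · change 𝐜 ∈ _
      rw [show 𝐜 = (torusBundleToSapphire h 𝛄)⁻¹ * 𝐚 by simp]
      exact mul_mem (Subgroup.mem_sup_left (inv_mem ⟨𝛄, rfl⟩))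
        (Subgroup.mem_sup_right (Subgroup.mem_zpowers _))
  · rw [MonoidHom.range_le_ker_iff]
    refine PresentedGroup.ext fun i => ?_
    fin_cases i
    · change φ (torusBundleToSapphire h 𝛂) = 1
      rw [torusBundleToSapphire_of_zero, map_pow, ha]
      decide
    · simp [hb]
    · simp [ha, hc]
  · rw [ha, orderOf_ofAdd_eq_addOrderOf, ZMod.addOrderOf_one]

end SapphireKernel

theorem stmt4 (r s t u : ℤ) (h : r * u - s * t = 1)
    (φ : SapphireGroup r s t u →* Multiplicative (ZMod 2))
    (ha : φ (PresentedGroup.of 0) = Multiplicative.ofAdd (1 : ZMod 2))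
    (hb : φ (PresentedGroup.of 1) = Multiplicative.ofAdd (0 : ZMod 2))
    (hc : φ (PresentedGroup.of 2) = Multiplicative.ofAdd (1 : ZMod 2)) :
    Nonempty (φ.ker ≃*
      TorusBundleGroup (r * u + t * s) (-(2 * r * t)) (-(2 * s * u)) (r * u + t * s)) :=
  ⟨((MonoidHom.ofInjective (torusBundleToSapphire_injective h)).trans
    (MulEquiv.subgroupCongr (range_torusBundleToSapphire h φ ha hb hc))).symm⟩
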